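/- arXiv:1002.0374 — 9 statements merged into one kernel-verified Lean document; each statement's English description precedes it below -/
import Mathlib

section
/- The maximum cardinality of a subset of [2]^n = {1,2}^n containing no combinatorial line equals the binomial coefficient C(n, floor(n/2)). -/
/-- A subset of `[k]^n` (modeled as `Fin n → Fin k`) is line-free if it contains no
combinatorial line: a line is given by a template `w : Fin n → Option (Fin k)` with at
least one wildcard (`none`), yielding the points obtained by substituting each `i : Fin k`
for the wildcard. -/
def LineFree {n k : ℕ} (A : Finset (Fin n → Fin k)) : Prop :=
  ¬ ∃ w : Fin n → Option (Fin k), (∃ j, w j = none) ∧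
      ∀ i : Fin k, (fun j => (w j).getD i) ∈ A

/-!
A combinatorial line in `[2]^n` is exactly a pair `a < b` for the pointwise order: the
wildcards are the coordinates where `a` is `0` and `b` is `1`. So line-free sets are the
antichains of `Fin n → Fin 2`, which is order isomorphic to `Finset (Fin n)` via the
support, and the theorem is Sperner's theorem; a middle layer attains the bound.
-/

open Finset

def funFinTwoOrderIsoFinset (α : Type*) [Fintype α] [DecidableEq α] :
    (α → Fin 2) ≃o Finset α where
  toFun a := {j | a j = 1}
  invFun s j := if j ∈ s then 1 else 0
  left_inv a := by
    funext j
    simp only [mem_filter, mem_univ, true_and]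
    split <;> omega
  right_inv s := by
    ext j
    by_cases h : j ∈ s <;> simp [h]
  map_rel_iff' {a b} := by
    simp only [Equiv.coe_fn_mk, subset_iff, mem_filter, mem_univ, true_and,
      Pi.le_def, Fin.le_def]
    refine forall_congr' fun j => ?_
    omega

theorem lineFree_iff_isAntichain {n : ℕ} (A : Finset (Fin n → Fin 2)) :
    LineFree A ↔ IsAntichain (· ≤ ·) (A : Set (Fin n → Fin 2)) := by
  rw [isAntichain_iff_forall_not_lt, LineFree, not_iff_comm]
  push Not
  constructor
  · rintro ⟨a, ha : a ∈ A, b, hb : b ∈ A, hab⟩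
    refine ⟨fun j => if a j = b j then some (a j) else none, ?_,
      Fin.forall_fin_two.mpr ⟨?_, ?_⟩⟩
    · obtain ⟨j, hj⟩ := Function.ne_iff.mp hab.ne
      exact ⟨j, if_neg hj⟩
    · convert ha using 1
      funext j
      have := hab.le j
      grind
    · convert hb using 1
      funext j
      have := hab.le j
      grind
  · rintro ⟨w, ⟨j, hj⟩, hw⟩
    refine ⟨_, hw 0, _, hw 1, Pi.lt_def.mpr ⟨fun i => ?_, j, by simp [hj]⟩⟩
    cases h : w i <;> simp [h]

theorem LineFree.card_le_choose_half {n : ℕ} {A : Finset (Fin n → Fin 2)} (hA : LineFree A) :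
    #A ≤ n.choose (n / 2) := by
  let e := funFinTwoOrderIsoFinset (Fin n)
  have hanti : IsAntichain (· ⊆ ·) (A.map e.toEquiv.toEmbedding : Set (Finset (Fin n))) := by
    rw [coe_map]
    exact ((lineFree_iff_isAntichain A).mp hA).image_iso e
  simpa using hanti.sperner

theorem exists_lineFree_card_eq_choose_half (n : ℕ) :
    ∃ A : Finset (Fin n → Fin 2), LineFree A ∧ #A = n.choose (n / 2) := by
  let e := (funFinTwoOrderIsoFinset (Fin n)).symm
  refine ⟨(powersetCard (n / 2) univ).map e.toEquiv.toEmbedding, ?_, by simp⟩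
  rw [lineFree_iff_isAntichain, coe_map]
  exact (Set.sized_powersetCard _ _).isAntichain.image_iso e

/-- Sperner's theorem in density Hales-Jewett form: `c_{n,2} = C(n, ⌊n/2⌋)`. -/
theorem sperner_dhj (n : ℕ) :
    IsGreatest {m | ∃ A : Finset (Fin n → Fin 2), LineFree A ∧ A.card = m}
      (n.choose (n / 2)) :=
  ⟨exists_lineFree_card_eq_choose_half n, by
    rintro _ ⟨A, hA, rfl⟩
    exact hA.card_le_choose_half⟩
end

section
/- The maximum cardinality c_{3,3} of a line-free subset of [3]^3 equals 18. -/
/-- `c_{3,3} = 18`. -/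
theorem c33_eq_eighteen :
    IsGreatest {m | ∃ A : Finset (Fin 3 → Fin 3), LineFree A ∧ A.card = m} 18 := by
  constructor
  · refine ⟨Finset.univ.filter (fun v => v 0 + v 1 + v 2 ≠ 0), ?_, ?_⟩
    · unfold LineFree; decide
    · decide
  · rintro m ⟨A, hA, rfl⟩
    have key : ∀ b c : Fin 3, ∃ i : Fin 3, ![i, b, c] ∉ A := by
      intro b c
      by_contra h
      push_neg at h
      refine hA ⟨![none, some b, some c], ⟨0, rfl⟩, fun i => ?_⟩
      have he : (fun j => ((![none, some b, some c] : Fin 3 → Option (Fin 3)) j).getD i)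
          = ![i, b, c] := by
        funext j; fin_cases j <;> rfl
      rw [he]; exact h i
    classical
    set g : Fin 3 → Fin 3 → Fin 3 := fun b c => (key b c).choose with hg
    have hgA : ∀ b c, ![g b c, b, c] ∉ A := fun b c => (key b c).choose_spec
    set S : Finset (Fin 3 → Fin 3) :=
      (Finset.univ : Finset (Fin 3 × Fin 3)).image (fun p => ![g p.1 p.2, p.1, p.2]) with hS
    have hcard : S.card = 9 := by
      rw [hS, Finset.card_image_of_injective _ ?_, Finset.card_univ]
      · rfl
      · intro p q hpq
        have h1 := congrFun hpq 1
        have h2 := congrFun hpq 2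
        simp only [Matrix.cons_val_one, Matrix.head_cons] at h1
        simp only [Matrix.cons_val_two, Matrix.tail_cons, Matrix.head_cons] at h2
        exact Prod.ext h1 h2
    have hsub : S ⊆ Finset.univ \ A := by
      intro v hv
      rw [hS, Finset.mem_image] at hv
      obtain ⟨p, _, rfl⟩ := hv
      exact Finset.mem_sdiff.mpr ⟨Finset.mem_univ _, hgA p.1 p.2⟩
    have h9 : 9 ≤ (Finset.univ \ A).card := hcard ▸ Finset.card_le_card hsub
    have h27 : (Finset.univ \ A).card = 27 - A.card := by
      rw [Finset.card_sdiff_of_subset (Finset.subset_univ A), Finset.card_univ]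
      rfl
    have hAle : A.card ≤ 27 := by
      have := Finset.card_le_card (Finset.subset_univ A)
      simpa using this
    omega
end

section
/- If B is a subset of the discrete simplex Δ_{n,3} = {(a,b,c) ∈ ℕ^3 : a+b+c = n} containing no upward equilateral triangle {(a+r,b,c),(a,b+r,c),(a,b,c+r)} with r > 0, then the union over (a,b,c) ∈ B of the cells Γ_{a,b,c} (words in [3]^n with exactly a ones, b twos, and c threes) is a line-free subset of [3]^n. -/
/-- A set of words in `[3]^n` is line-free if it contains no combinatorial line. -/
def LineFreeS {n : ℕ} (A : Set (Fin n → Fin 3)) : Prop :=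
  ¬ ∃ w : Fin n → Option (Fin 3), (∃ j, w j = none) ∧
      ∀ i : Fin 3, (fun j => (w j).getD i) ∈ A

/-- The number of occurrences of the letter `i` in the word `w`. -/
def cnt {n : ℕ} (w : Fin n → Fin 3) (i : Fin 3) : ℕ :=
  (Finset.univ.filter fun j => w j = i).card

/-- If `B ⊆ Δ_{n,3}` contains no upward equilateral triangle
`(a+r,b,c), (a,b+r,c), (a,b,c+r)` with `r > 0` (i.e. `B` is a Fujimura set), then the
union of the cells `Γ_{a,b,c}` over `(a,b,c) ∈ B` is a line-free subset of `[3]^n`. -/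
theorem fujimura_gives_line_free (n : ℕ) (B : Set (ℕ × ℕ × ℕ))
    (hB : ∀ p ∈ B, p.1 + p.2.1 + p.2.2 = n)
    (hfuji : ∀ a b c r : ℕ, 0 < r →
      ¬((a + r, b, c) ∈ B ∧ (a, b + r, c) ∈ B ∧ (a, b, c + r) ∈ B)) :
    LineFreeS {w : Fin n → Fin 3 | (cnt w 0, cnt w 1, cnt w 2) ∈ B} := by
  classical
  rintro ⟨w, ⟨j0, hj0⟩, hmem⟩
  set a := (Finset.univ.filter fun j => w j = some 0).card with ha
  set b := (Finset.univ.filter fun j => w j = some 1).card with hb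
  set c := (Finset.univ.filter fun j => w j = some 2).card with hc
  set r := (Finset.univ.filter fun j => w j = none).card with hrr
  have hr : 0 < r := Finset.card_pos.2 ⟨j0, by simp [hj0]⟩
  have key : ∀ i k : Fin 3, cnt (fun j => (w j).getD i) k =
      (Finset.univ.filter fun j => w j = some k).card + if k = i then r else 0 := by
    intro i k
    unfold cnt
    by_cases h : k = i
    · subst h
      rw [if_pos rfl, hrr, ← Finset.card_union_of_disjoint]
      · congr 1
        ext j
        simp only [Finset.mem_filter, Finset.mem_union, Finset.mem_univ, true_and]
        cases hw : w j <;> simp [hw]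
      · rw [Finset.disjoint_left]
        intro j hj1 hj2
        simp only [Finset.mem_filter] at hj1 hj2
        rw [hj1.2] at hj2
        exact Option.some_ne_none _ hj2.2
    · rw [if_neg h, add_zero]
      congr 1
      ext j
      simp only [Finset.mem_filter, Finset.mem_univ, true_and]
      cases hw : w j <;> simp [hw]; exact fun e => h e.symm
  have h0 := hmem 0
  have h1 := hmem 1
  have h2 := hmem 2
  simp only [Set.mem_setOf_eq, key] at h0 h1 h2
  norm_num at h0 h1 h2
  exact hfuji a b c r hr ⟨h0, h1, h2⟩
end

section
/- The maximum cardinality c'_{2,3} of a subset of [3]^2 containing no geometric line equals 6. -/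
set_option maxRecDepth 100000

/-- The cube `[3]^n = {1,2,3}^n`, viewed inside `ℤ^n`. -/
def cube (n : ℕ) : Finset (Fin n → ℤ) :=
  Fintype.piFinset fun _ => ({1, 2, 3} : Finset ℤ)

/-- A Moser set: a set containing no geometric line `{a, a+r, a+2r}` with `r ≠ 0`. -/
def MoserFree {n : ℕ} (A : Finset (Fin n → ℤ)) : Prop :=
  ¬ ∃ a r : Fin n → ℤ, r ≠ 0 ∧ a ∈ A ∧ a + r ∈ A ∧ a + r + r ∈ A

def pt (x y : ℤ) : Fin 2 → ℤ := ![x, y]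

def A6 : Finset (Fin 2 → ℤ) := {pt 1 2, pt 1 3, pt 2 1, pt 2 3, pt 3 1, pt 3 2}

def dec3 : Fin 3 × Fin 3 → (Fin 2 → ℤ) := fun p => ![(p.1 : ℤ) + 1, (p.2 : ℤ) + 1]

def enc3 : (Fin 2 → ℤ) → Fin 3 × Fin 3 := fun a =>
  (⟨(a 0 - 1).toNat % 3, Nat.mod_lt _ (by norm_num)⟩,
   ⟨(a 1 - 1).toNat % 3, Nat.mod_lt _ (by norm_num)⟩)

def lines : List ((Fin 3 × Fin 3) × (Fin 3 × Fin 3) × (Fin 3 × Fin 3)) :=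
  [((0,0),(0,1),(0,2)), ((1,0),(1,1),(1,2)), ((2,0),(2,1),(2,2)),
   ((0,0),(1,0),(2,0)), ((0,1),(1,1),(2,1)), ((0,2),(1,2),(2,2)),
   ((0,0),(1,1),(2,2)), ((0,2),(1,1),(2,0))]

theorem key : ∀ B : Finset (Fin 3 × Fin 3), 7 ≤ B.card →
    ∃ t ∈ lines, t.1 ∈ B ∧ t.2.1 ∈ B ∧ t.2.2 ∈ B := by decide

theorem line_prop : ∀ t ∈ lines,
    dec3 t.1 + (dec3 t.2.1 - dec3 t.1) + (dec3 t.2.1 - dec3 t.1) = dec3 t.2.2 ∧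
    dec3 t.2.1 - dec3 t.1 ≠ 0 := by decide

theorem dec_enc {a : Fin 2 → ℤ} (h : a ∈ cube 2) : dec3 (enc3 a) = a := by
  simp only [cube, Fintype.mem_piFinset, Finset.mem_insert, Finset.mem_singleton] at h
  have h0 := h 0
  have h1 := h 1
  funext i
  fin_cases i <;>
    [rcases h0 with h' | h' | h'; rcases h1 with h' | h' | h'] <;>
    simp [dec3, enc3, h']

/-- `c'_{2,3} = 6`. -/
theorem moser_2_eq_six :
    IsGreatest {m | ∃ A : Finset (Fin 2 → ℤ), A ⊆ cube 2 ∧ MoserFree A ∧ A.card = m}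
      6 := by
  constructor
  · refine ⟨A6, by decide, ?_, by decide⟩
    rintro ⟨a, r, hr, ha, h1, h2⟩
    simp only [A6, pt, Finset.mem_insert, Finset.mem_singleton, funext_iff,
      Fin.forall_fin_two, Pi.add_apply, Pi.zero_apply, ne_eq, not_and, not_forall,
      Matrix.cons_val_zero, Matrix.cons_val_one, Matrix.head_cons] at hr ha h1 h2
    omega
  · rintro m ⟨A, hsub, hmf, rfl⟩
    by_contra hle
    push_neg at hle
    have h7 : 7 ≤ (A.image enc3).card := by
      rwa [Finset.card_image_of_injOn fun x hx y hy hxy => by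
        rw [← dec_enc (hsub hx), ← dec_enc (hsub hy), hxy]]
    obtain ⟨t, ht, hp, hq, hs⟩ := key _ h7
    have mem : ∀ p ∈ A.image enc3, dec3 p ∈ A := by
      intro p hp
      obtain ⟨a, haA, rfl⟩ := Finset.mem_image.mp hp
      rwa [dec_enc (hsub haA)]
    obtain ⟨heq, hne⟩ := line_prop t ht
    exact hmf ⟨dec3 t.1, dec3 t.2.1 - dec3 t.1, hne, mem _ hp,
      by rw [add_sub_cancel]; exact mem _ hq,
      by rw [heq]; exact mem _ hs⟩
end

section
/- The maximum cardinality c'_{3,3} of a subset of [3]^3 containing no geometric line equals 16. -/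
/-!
If the centre of the cube lies in a Moser set `A`, reflection in the centre pairs off the other
`26` points, at most one of each pair lying in `A`, so `#A ≤ 14`. Otherwise count `A` three
times over. A face of the cube is a union of three lines, so it meets `A` in at most `6` points,
and in at most `5` when its own centre lies in `A`, by reflection in that centre. Through each
face centre take the line in the direction of the next coordinate: it meets `A` in at most `2`
points. Every point other than the centre is covered at least three times by the faces, the
face centres and these six lines, hence `3 * #A ≤ 6 * 6 + 6 * 2 = 48`. The twelve edge
midpoints together with the four corners with an even number of coordinates `3` show that `16`
is attained.
-/

open Finset

section

variable {n : ℕ}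

def line (a r : Fin n → ℤ) : Finset (Fin n → ℤ) := {a, a + r, a + r + r}

theorem MoserFree.mono {A B : Finset (Fin n → ℤ)} (hBA : B ⊆ A) (hA : MoserFree A) :
    MoserFree B :=
  fun ⟨a, r, hr, h₀, h₁, h₂⟩ => hA ⟨a, r, hr, hBA h₀, hBA h₁, hBA h₂⟩

theorem moserFree_of_add_eq_add_self {A : Finset (Fin n → ℤ)}
    (hA : ∀ a ∈ A, ∀ b ∈ A, ∀ c ∈ A, a + c = b + b → a = b) : MoserFree A :=
  fun ⟨a, r, hr, ha, hb, hc⟩ => hr (add_eq_left.1 (hA a ha _ hb _ hc (by abel)).symm)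

theorem MoserFree.card_inter_line_le_two {A : Finset (Fin n → ℤ)} (hA : MoserFree A)
    (a : Fin n → ℤ) {r : Fin n → ℤ} (hr : r ≠ 0) : #(A ∩ line a r) ≤ 2 := by
  by_contra! h
  have hline : line a r ⊆ A :=
    inter_eq_right.1 (eq_of_subset_of_card_le inter_subset_right (card_le_three.trans h))
  exact hA ⟨a, r, hr, hline (by simp [line]), hline (by simp [line]), hline (by simp [line])⟩

theorem MoserFree.card_inter_le_of_subset_biUnion_line {ι : Type*} {A S : Finset (Fin n → ℤ)}
    (hA : MoserFree A) {T : Finset ι} {a r : ι → Fin n → ℤ} (hr : ∀ t ∈ T, r t ≠ 0)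
    (hS : S ⊆ T.biUnion fun t => line (a t) (r t)) : #(A ∩ S) ≤ 2 * #T :=
  calc #(A ∩ S) ≤ #(T.biUnion fun t => A ∩ line (a t) (r t)) := by
        rw [← inter_biUnion]
        exact card_le_card (inter_subset_inter_left hS)
    _ ≤ ∑ t ∈ T, #(A ∩ line (a t) (r t)) := card_biUnion_le
    _ ≤ ∑ _t ∈ T, 2 := sum_le_sum fun t ht => hA.card_inter_line_le_two _ (hr t ht)
    _ = 2 * #T := by rw [sum_const, smul_eq_mul, mul_comm]

theorem MoserFree.two_mul_card_le_of_mem {A S : Finset (Fin n → ℤ)} {c : Fin n → ℤ}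
    (hA : MoserFree A) (hAS : A ⊆ S) (hS : ∀ p ∈ S, c + c - p ∈ S) (hc : c ∈ A) :
    2 * #A ≤ #S + 1 := by
  set A' := A.erase c
  have hdisj : Disjoint A' (A'.image fun p => c + c - p) := by
    refine disjoint_left.2 fun q hq hq' => ?_
    obtain ⟨p, hp, rfl⟩ := mem_image.1 hq'
    refine hA ⟨p, c - p, sub_ne_zero.2 (ne_of_mem_erase hp).symm, mem_of_mem_erase hp, ?_, ?_⟩
    · simpa using hc
    · convert mem_of_mem_erase hq using 1
      abel
  have hsub : A' ∪ A'.image (fun p => c + c - p) ⊆ S.erase c := by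
    refine union_subset (erase_subset_erase c hAS) fun q hq => ?_
    obtain ⟨p, hp, rfl⟩ := mem_image.1 hq
    refine mem_erase.2 ⟨fun h => ne_of_mem_erase hp ?_, hS p (hAS (mem_of_mem_erase hp))⟩
    linear_combination -h
  have hcard := card_le_card hsub
  rw [card_union_of_disjoint hdisj, card_image_of_injective _ (fun p q h => by simpa using h),
    card_erase_of_mem hc, card_erase_of_mem (hAS hc)] at hcard
  have := card_pos.2 ⟨c, hc⟩
  have := card_pos.2 ⟨c, hAS hc⟩
  omega

def centre (n : ℕ) : Fin n → ℤ := fun _ => 2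

theorem card_cube : #(cube n) = 3 ^ n := by simp [cube]

theorem centre_add_centre_sub_mem_cube {p : Fin n → ℤ} (hp : p ∈ cube n) :
    centre n + centre n - p ∈ cube n := by
  simp only [cube, Fintype.mem_piFinset, mem_insert, mem_singleton] at hp ⊢
  intro i
  have := hp i
  simp only [Pi.sub_apply, Pi.add_apply, centre]
  omega

theorem MoserFree.two_mul_card_le_of_centre_mem {A : Finset (Fin n → ℤ)} (hA : MoserFree A)
    (hAc : A ⊆ cube n) (hc : centre n ∈ A) : 2 * #A ≤ 3 ^ n + 1 :=
  card_cube (n := n) ▸ hA.two_mul_card_le_of_mem hAc (fun _ => centre_add_centre_sub_mem_cube) hc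

def face (n : ℕ) (i : Fin n) (v : ℤ) : Finset (Fin n → ℤ) := {p ∈ cube n | p i = v}

def faceCentre (i : Fin n) (v : ℤ) : Fin n → ℤ := Function.update (centre n) i v

theorem faceCentre_mem_face {i : Fin n} {v : ℤ} (hv : v ∈ ({1, 2, 3} : Finset ℤ)) :
    faceCentre i v ∈ face n i v := by
  simp only [face, cube, mem_filter, Fintype.mem_piFinset, faceCentre, Function.update_self,
    and_true]
  intro j
  rcases eq_or_ne j i with rfl | hj
  · simpa using hv
  · simp [Function.update_of_ne hj, centre]

theorem faceCentre_add_faceCentre_sub_mem_face {i : Fin n} {v : ℤ} {p : Fin n → ℤ}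
    (hp : p ∈ face n i v) : faceCentre i v + faceCentre i v - p ∈ face n i v := by
  simp only [face, cube, mem_filter, Fintype.mem_piFinset, mem_insert, mem_singleton] at hp ⊢
  obtain ⟨hp, rfl⟩ := hp
  refine ⟨fun j => ?_, by simp [faceCentre]⟩
  have := hp j
  rcases eq_or_ne j i with rfl | hj
  · simp only [Pi.sub_apply, Pi.add_apply, faceCentre, Function.update_self]
    omega
  · simp only [Pi.sub_apply, Pi.add_apply, faceCentre, Function.update_of_ne hj, centre]
    omega

end

theorem card_face_three : ∀ i : Fin 3, ∀ v ∈ ({1, 3} : Finset ℤ), #(face 3 i v) = 9 := by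
  decide

theorem card_filter_face_three :
    ∀ i : Fin 3, ∀ v ∈ ({1, 3} : Finset ℤ), #{p ∈ face 3 i v | p (i + 1) = 1} = 3 := by
  decide

theorem face_three_subset_biUnion_line : ∀ i : Fin 3, ∀ v ∈ ({1, 3} : Finset ℤ),
    face 3 i v ⊆
      {p ∈ face 3 i v | p (i + 1) = 1}.biUnion fun a => line a (Pi.single (i + 1) 1) := by
  decide

theorem MoserFree.card_inter_face_add_le_six {A : Finset (Fin 3 → ℤ)} (hA : MoserFree A)
    {i : Fin 3} {v : ℤ} (hv : v ∈ ({1, 3} : Finset ℤ)) :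
    #(A ∩ face 3 i v) + #(A ∩ {faceCentre i v}) ≤ 6 := by
  by_cases hc : faceCentre i v ∈ A
  · have hmem : faceCentre i v ∈ A ∩ face 3 i v :=
      mem_inter.2
        ⟨hc, faceCentre_mem_face ((by decide : ({1, 3} : Finset ℤ) ⊆ {1, 2, 3}) hv)⟩
    have := (hA.mono inter_subset_left).two_mul_card_le_of_mem inter_subset_right
      (fun _ => faceCentre_add_faceCentre_sub_mem_face) hmem
    have := card_face_three i v hv
    have : #(A ∩ {faceCentre i v}) = 1 := by simp [hc]
    omega
  · have := hA.card_inter_le_of_subset_biUnion_line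
      (fun _ _ => Pi.single_ne_zero_iff.2 one_ne_zero) (face_three_subset_biUnion_line i v hv)
    have := card_filter_face_three i v hv
    have : #(A ∩ {faceCentre i v}) = 0 := by simp [hc]
    omega

def faceLine (i : Fin 3) (v : ℤ) : Finset (Fin 3 → ℤ) :=
  line (Function.update (faceCentre i v) (i + 1) 1) (Pi.single (i + 1) 1)

/-- A corner is covered by its three faces, an edge midpoint by its two faces and one face line,
and a face centre by its face (twice) and one face line. -/
theorem three_le_sum_cover : ∀ p ∈ cube 3, p ≠ centre 3 →
    3 ≤ ∑ i : Fin 3, ∑ v ∈ ({1, 3} : Finset ℤ), ((if p ∈ face 3 i v then 1 else 0) +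
      (if p ∈ ({faceCentre i v} : Finset _) then 1 else 0) +
      (if p ∈ faceLine i v then 1 else 0)) := by
  decide

theorem MoserFree.card_le_sixteen_of_centre_not_mem {A : Finset (Fin 3 → ℤ)} (hA : MoserFree A)
    (hAc : A ⊆ cube 3) (hc : centre 3 ∉ A) : #A ≤ 16 := by
  have hpiece : ∀ i : Fin 3, ∀ v ∈ ({1, 3} : Finset ℤ),
      #(A ∩ face 3 i v) + #(A ∩ {faceCentre i v}) + #(A ∩ faceLine i v) ≤ 8 := fun i v hv =>
    add_le_add (hA.card_inter_face_add_le_six hv)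
      (hA.card_inter_line_le_two _ (Pi.single_ne_zero_iff.2 one_ne_zero))
  have : 3 * #A ≤ 48 :=
    calc 3 * #A = ∑ p ∈ A, 3 := by rw [sum_const, smul_eq_mul, mul_comm]
      _ ≤ ∑ p ∈ A, _ :=
        sum_le_sum fun p hp => three_le_sum_cover p (hAc hp) (ne_of_mem_of_not_mem hp hc)
      _ = ∑ i : Fin 3, ∑ v ∈ ({1, 3} : Finset ℤ),
          (#(A ∩ face 3 i v) + #(A ∩ {faceCentre i v}) + #(A ∩ faceLine i v)) := by
        rw [sum_comm]
        refine sum_congr rfl fun i _ => ?_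
        rw [sum_comm]
        simp only [sum_add_distrib, ← card_filter, filter_mem_eq_inter]
      _ ≤ ∑ _i : Fin 3, ∑ _v ∈ ({1, 3} : Finset ℤ), 8 :=
        sum_le_sum fun i _ => sum_le_sum (hpiece i)
      _ = 48 := rfl
  omega

def moserSixteen : Finset (Fin 3 → ℤ) :=
  {![2, 1, 1], ![2, 1, 3], ![2, 3, 1], ![2, 3, 3], ![1, 2, 1], ![1, 2, 3], ![3, 2, 1], ![3, 2, 3],
    ![1, 1, 2], ![1, 3, 2], ![3, 1, 2], ![3, 3, 2], ![1, 1, 1], ![1, 3, 3], ![3, 1, 3], ![3, 3, 1]}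

theorem moserSixteen_subset_cube : moserSixteen ⊆ cube 3 := by decide

theorem card_moserSixteen : #moserSixteen = 16 := by decide

theorem moserFree_moserSixteen : MoserFree moserSixteen :=
  moserFree_of_add_eq_add_self (by decide)

/-- `c'_{3,3} = 16`. -/
theorem moser_3_eq_sixteen :
    IsGreatest {m | ∃ A : Finset (Fin 3 → ℤ), A ⊆ cube 3 ∧ MoserFree A ∧ A.card = m}
      16 := by
  refine ⟨⟨moserSixteen, moserSixteen_subset_cube, moserFree_moserSixteen, card_moserSixteen⟩,
    ?_⟩
  rintro _ ⟨A, hAc, hA, rfl⟩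
  by_cases hc : centre 3 ∈ A
  · have := hA.two_mul_card_le_of_centre_mem hAc hc
    omega
  · exact hA.card_le_sixteen_of_centre_not_mem hAc hc
end

section
/- For 1 ≤ i ≤ n, the union of the sphere S_{i-1,n} and the even half-sphere S_{i,n}^e contains no geometric line; consequently c'_{n,3} ≥ C(n+1,i)·2^{i-1}. -/
/-- The sphere `S_{i,n}`: words in `[3]^n` with exactly `n - i` coordinates equal to 2. -/
def sphere (n i : ℕ) : Finset (Fin n → ℤ) :=
  (cube n).filter fun x => (Finset.univ.filter fun j => x j = (2 : ℤ)).card = n - i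

/-- The even half-sphere `S_{i,n}^e`: elements of `S_{i,n}` with an even number of 1's. -/
def sphereEven (n i : ℕ) : Finset (Fin n → ℤ) :=
  (sphere n i).filter fun x => Even (Finset.univ.filter fun j => x j = (1 : ℤ)).card

/-- The Moser number `c'_{n,3}`. -/
noncomputable def cMoser (n : ℕ) : ℕ :=
  sSup {m | ∃ A : Finset (Fin n → ℤ), A ⊆ cube n ∧ MoserFree A ∧ A.card = m}

lemma mem_cube {n : ℕ} {x : Fin n → ℤ} :
    x ∈ cube n ↔ ∀ j, x j = 1 ∨ x j = 2 ∨ x j = 3 := by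
  simp [cube, Fintype.mem_piFinset]

/-- Per-coordinate analysis of a geometric line in the cube. -/
lemma line_coord {n : ℕ} {a r : Fin n → ℤ} (ha : a ∈ cube n) (hm : a + r ∈ cube n)
    (hb : a + r + r ∈ cube n) (j : Fin n) :
    r j = 0 ∨ (r j = 1 ∧ a j = 1) ∨ (r j = -1 ∧ a j = 3) := by
  have h1 := mem_cube.1 ha j
  have h2 := mem_cube.1 hm j
  have h3 := mem_cube.1 hb j
  simp only [Pi.add_apply] at h2 h3
  omega

lemma filter_two_b {n : ℕ} {a r : Fin n → ℤ} (ha : a ∈ cube n) (hm : a + r ∈ cube n)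
    (hb : a + r + r ∈ cube n) :
    (Finset.univ.filter fun j => (a + r + r) j = (2:ℤ)) =
      (Finset.univ.filter fun j => a j = (2:ℤ)) := by
  ext j
  have := line_coord ha hm hb j
  simp only [Finset.mem_filter, Finset.mem_univ, true_and, Pi.add_apply]
  omega

lemma filter_two_m {n : ℕ} {a r : Fin n → ℤ} (ha : a ∈ cube n) (hm : a + r ∈ cube n)
    (hb : a + r + r ∈ cube n) :
    (Finset.univ.filter fun j => (a + r) j = (2:ℤ)).card =
      (Finset.univ.filter fun j => a j = (2:ℤ)).card +
        (Finset.univ.filter fun j => r j ≠ 0).card := by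
  rw [← Finset.card_union_of_disjoint]
  · congr 1
    ext j
    have := line_coord ha hm hb j
    simp only [Finset.mem_filter, Finset.mem_univ, true_and, Pi.add_apply, Finset.mem_union]
    omega
  · rw [Finset.disjoint_left]
    intro j hj hj'
    have := line_coord ha hm hb j
    simp only [Finset.mem_filter, Finset.mem_univ, true_and] at hj hj'
    omega

lemma one_parity {n : ℕ} {a r : Fin n → ℤ} (ha : a ∈ cube n) (hm : a + r ∈ cube n)
    (hb : a + r + r ∈ cube n) :
    (Finset.univ.filter fun j => a j = (1:ℤ)).card +
      (Finset.univ.filter fun j => (a + r + r) j = (1:ℤ)).card =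
    (Finset.univ.filter fun j => r j ≠ 0).card +
      2 * ((Finset.univ.filter fun j => a j = (1:ℤ)) ∩
        (Finset.univ.filter fun j => (a + r + r) j = (1:ℤ))).card := by
  set u := Finset.univ.filter fun j => a j = (1:ℤ) with hu
  set v := Finset.univ.filter fun j => (a + r + r) j = (1:ℤ) with hv
  set s1 := Finset.univ.filter fun j : Fin n => r j ≠ 0 with hs1
  have key : u ∪ v = s1 ∪ (u ∩ v) := by
    ext j
    have := line_coord ha hm hb j
    simp only [hu, hv, hs1, Finset.mem_union, Finset.mem_inter, Finset.mem_filter,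
      Finset.mem_univ, true_and, Pi.add_apply]
    omega
  have hdisj : Disjoint s1 (u ∩ v) := by
    rw [Finset.disjoint_left]
    intro j hj hj'
    simp only [hu, hv, hs1, Finset.mem_inter, Finset.mem_filter, Finset.mem_univ, true_and,
      Pi.add_apply] at hj hj'
    omega
  have := Finset.card_union_add_card_inter u v
  rw [key, Finset.card_union_of_disjoint hdisj] at this
  omega

lemma sphere_subset_cube {n k : ℕ} : sphere n k ⊆ cube n := Finset.filter_subset _ _

lemma sphereEven_subset_sphere {n k : ℕ} : sphereEven n k ⊆ sphere n k := Finset.filter_subset _ _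

lemma moser_main {n i : ℕ} (h1 : 1 ≤ i) (h2 : i ≤ n) :
    ¬ ∃ a r : Fin n → ℤ, r ≠ 0 ∧ a ∈ sphere n (i - 1) ∪ sphereEven n i ∧
      a + r ∈ sphere n (i - 1) ∪ sphereEven n i ∧
      a + r + r ∈ sphere n (i - 1) ∪ sphereEven n i := by
  rintro ⟨a, r, hr, hA, hM, hB⟩
  have ha : a ∈ cube n := by
    rcases Finset.mem_union.1 hA with h | h
    · exact sphere_subset_cube h
    · exact sphere_subset_cube (sphereEven_subset_sphere h)
  have hm : a + r ∈ cube n := by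
    rcases Finset.mem_union.1 hM with h | h
    · exact sphere_subset_cube h
    · exact sphere_subset_cube (sphereEven_subset_sphere h)
  have hb : a + r + r ∈ cube n := by
    rcases Finset.mem_union.1 hB with h | h
    · exact sphere_subset_cube h
    · exact sphere_subset_cube (sphereEven_subset_sphere h)
  set d := (Finset.univ.filter fun j : Fin n => r j ≠ 0).card with hd
  have hd1 : 1 ≤ d := by
    rcases Function.ne_iff.1 hr with ⟨j, hj⟩
    have hj' : r j ≠ 0 := by simpa using hj
    have : j ∈ Finset.univ.filter fun j : Fin n => r j ≠ 0 := by
      simp [hj']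
    exact Finset.card_pos.2 ⟨j, this⟩
  -- two-counts
  set c2a := (Finset.univ.filter fun j => a j = (2:ℤ)).card with hc2a
  have hbb : (Finset.univ.filter fun j => (a + r + r) j = (2:ℤ)).card = c2a := by
    rw [filter_two_b ha hm hb]
  have hmm : (Finset.univ.filter fun j => (a + r) j = (2:ℤ)).card = c2a + d :=
    filter_two_m ha hm hb
  -- membership characterization via two-count
  have distinct : n - (i - 1) = n - i + 1 := by omega
  -- endpoints have equal two-count, so they are in the same part
  rcases Finset.mem_union.1 hA with haS | haE
  · -- a ∈ sphere n (i-1), so c2a = n - i + 1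
    have hca : c2a = n - i + 1 := by
      have := (Finset.mem_filter.1 haS).2
      simp only [← hc2a] at this
      omega
    have hcb : (Finset.univ.filter fun j => (a + r + r) j = (2:ℤ)).card = n - i + 1 := by
      omega
    -- midpoint two-count is n - i + 1 + d
    rcases Finset.mem_union.1 hM with hmS | hmE
    · have := (Finset.mem_filter.1 hmS).2
      simp only [hmm] at this
      omega
    · have := (Finset.mem_filter.1 (sphereEven_subset_sphere hmE)).2
      simp only [hmm] at this
      omega
  · -- a ∈ sphereEven n i, so c2a = n - i
    have hca : c2a = n - i := by
      have := (Finset.mem_filter.1 (sphereEven_subset_sphere haE)).2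
      simp only [← hc2a] at this
      omega
    -- b is also in sphereEven (two-count forces it)
    have hbE : a + r + r ∈ sphereEven n i := by
      rcases Finset.mem_union.1 hB with hbS | hbE
      · exfalso
        have := (Finset.mem_filter.1 hbS).2
        omega
      · exact hbE
    rcases Finset.mem_union.1 hM with hmS | hmE
    · -- midpoint in sphere n (i-1): then d = 1, parity contradiction
      have := (Finset.mem_filter.1 hmS).2
      simp only [hmm] at this
      have hdone : d = 1 := by omega
      have hpar := one_parity ha hm hb
      have hea : Even (Finset.univ.filter fun j => a j = (1:ℤ)).card :=
        (Finset.mem_filter.1 haE).2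
      have heb : Even (Finset.univ.filter fun j => (a + r + r) j = (1:ℤ)).card :=
        (Finset.mem_filter.1 hbE).2
      rw [← hd, hdone] at hpar
      rcases hea with ⟨p, hp⟩
      rcases heb with ⟨q, hq⟩
      omega
    · have := (Finset.mem_filter.1 (sphereEven_subset_sphere hmE)).2
      simp only [hmm] at this
      omega

lemma card_sphere {n k : ℕ} (hk : k ≤ n) : (sphere n k).card = n.choose k * 2 ^ k := by
  classical
  have hfib : ∀ x ∈ sphere n k,
      (Finset.univ.filter fun j => x j = (2:ℤ)) ∈ Finset.powersetCard (n - k) (Finset.univ : Finset (Fin n)) := by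
    intro x hx
    rw [Finset.mem_powersetCard_univ]
    exact (Finset.mem_filter.1 hx).2
  rw [Finset.card_eq_sum_card_fiberwise hfib]
  have hfibcard : ∀ s ∈ Finset.powersetCard (n - k) (Finset.univ : Finset (Fin n)),
      ((sphere n k).filter fun x => (Finset.univ.filter fun j => x j = (2:ℤ)) = s).card = 2 ^ k := by
    intro s hs
    have hscard : s.card = n - k := (Finset.mem_powersetCard_univ.1 hs)
    have hset : ((sphere n k).filter fun x => (Finset.univ.filter fun j => x j = (2:ℤ)) = s) =
        Fintype.piFinset (fun j => if j ∈ s then ({2} : Finset ℤ) else {1, 3}) := by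
      ext x
      simp only [Finset.mem_filter, sphere, cube, Fintype.mem_piFinset, Finset.mem_insert,
        Finset.mem_singleton]
      constructor
      · rintro ⟨⟨hcube, -⟩, hfx⟩ j
        have hmem : j ∈ s ↔ x j = 2 := by rw [← hfx]; simp
        by_cases hj : j ∈ s
        · simp [if_pos hj, hmem.1 hj]
        · have h3 := hcube j
          have hne : x j ≠ 2 := fun h => hj (hmem.2 h)
          simp only [if_neg hj, Finset.mem_insert, Finset.mem_singleton]
          omega
      · intro h
        have hfx : (Finset.univ.filter fun j => x j = (2:ℤ)) = s := by
          ext j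
          have := h j
          by_cases hj : j ∈ s
          · simp only [if_pos hj, Finset.mem_singleton] at this
            simp [hj, this]
          · simp only [if_neg hj, Finset.mem_insert, Finset.mem_singleton] at this
            simp only [Finset.mem_filter, Finset.mem_univ, true_and]
            constructor
            · intro hx2; omega
            · intro h'; exact absurd h' hj
        refine ⟨⟨fun j => ?_, ?_⟩, hfx⟩
        · have := h j
          by_cases hj : j ∈ s
          · simp only [if_pos hj, Finset.mem_singleton] at this
            simp [this]
          · simp only [if_neg hj, Finset.mem_insert, Finset.mem_singleton] at this
            omega
        · rw [hfx, hscard]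
    rw [hset, Fintype.card_piFinset]
    have : ∀ j : Fin n, (if j ∈ s then ({2} : Finset ℤ) else {1, 3}).card = if j ∈ s then 1 else 2 := by
      intro j; split <;> simp
    rw [Finset.prod_congr rfl (fun j _ => this j), Finset.prod_ite,
      Finset.prod_const_one, Finset.prod_const, one_mul]
    congr 1
    have hfs : (Finset.univ.filter fun j : Fin n => j ∈ s) = s := by ext; simp
    have := Finset.card_filter_add_card_filter_not
      (s := (Finset.univ : Finset (Fin n))) (p := fun j => j ∈ s)
    rw [hfs] at this
    simp only [Finset.card_univ, Fintype.card_fin] at this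
    omega
  rw [Finset.sum_congr rfl hfibcard, Finset.sum_const, smul_eq_mul,
    Finset.card_powersetCard, Finset.card_univ, Fintype.card_fin, Nat.choose_symm hk]

open Finset in
/-- Flip the first non-2 coordinate between 1 and 3. -/
def flipOne {n : ℕ} (x : Fin n → ℤ) : Fin n → ℤ :=
  if h : (Finset.univ.filter fun j => x j ≠ 2).Nonempty then
    Function.update x ((Finset.univ.filter fun j => x j ≠ 2).min' h)
      (4 - x ((Finset.univ.filter fun j => x j ≠ 2).min' h))
  else x

lemma supp_nonempty {n i : ℕ} (h1 : 1 ≤ i) (h2 : i ≤ n) {x : Fin n → ℤ}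
    (hx : x ∈ sphere n i) : (Finset.univ.filter fun j => x j ≠ 2).Nonempty := by
  have hx2 := (Finset.mem_filter.1 hx).2
  have hsum : (Finset.univ.filter fun j => x j = (2:ℤ)).card +
      (Finset.univ.filter fun j => ¬ x j = (2:ℤ)).card = n := by
    have := Finset.card_filter_add_card_filter_not
      (s := (Finset.univ : Finset (Fin n))) (p := fun j => x j = 2)
    simpa using this
  rw [← Finset.card_pos]
  simp only [ne_eq]
  omega

section flipOnefacts
variable {n i : ℕ} {x : Fin n → ℤ}

lemma flipOne_eq (h : (Finset.univ.filter fun j => x j ≠ 2).Nonempty) :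
    flipOne x = Function.update x ((Finset.univ.filter fun j => x j ≠ 2).min' h)
      (4 - x ((Finset.univ.filter fun j => x j ≠ 2).min' h)) := by
  rw [flipOne, dif_pos h]

lemma flipOne_two_iff (hc : x ∈ cube n) (h : (Finset.univ.filter fun j => x j ≠ 2).Nonempty)
    (j : Fin n) : flipOne x j = 2 ↔ x j = 2 := by
  rw [flipOne_eq h]
  set j0 := (Finset.univ.filter fun j => x j ≠ 2).min' h with hj0
  have hj0mem : j0 ∈ Finset.univ.filter fun j => x j ≠ 2 := Finset.min'_mem _ h
  have hj0ne : x j0 ≠ 2 := by simpa using hj0mem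
  have hj0c := mem_cube.1 hc j0
  by_cases hjj : j = j0
  · subst hjj
    simp only [Function.update_self]
    omega
  · rw [Function.update_of_ne hjj]

lemma flipOne_filter_two (hc : x ∈ cube n) (h : (Finset.univ.filter fun j => x j ≠ 2).Nonempty) :
    (Finset.univ.filter fun j => flipOne x j = 2) = (Finset.univ.filter fun j => x j = 2) := by
  ext j
  simp [flipOne_two_iff hc h j]

lemma flipOne_mem_cube (hc : x ∈ cube n) : flipOne x ∈ cube n := by
  by_cases h : (Finset.univ.filter fun j => x j ≠ 2).Nonempty
  · rw [flipOne_eq h]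
    set j0 := (Finset.univ.filter fun j => x j ≠ 2).min' h with hj0
    have hj0c := mem_cube.1 hc j0
    rw [mem_cube]
    intro j
    by_cases hjj : j = j0
    · subst hjj
      simp only [Function.update_self]
      omega
    · rw [Function.update_of_ne hjj]
      exact mem_cube.1 hc j
  · rw [flipOne, dif_neg h]
    exact hc

lemma flipOne_mem_sphere (h1 : 1 ≤ i) (h2 : i ≤ n) (hx : x ∈ sphere n i) :
    flipOne x ∈ sphere n i := by
  have h := supp_nonempty h1 h2 hx
  have hc := sphere_subset_cube hx
  rw [sphere, Finset.mem_filter]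
  exact ⟨flipOne_mem_cube hc, by
    rw [flipOne_filter_two hc h]; exact (Finset.mem_filter.1 hx).2⟩

lemma flipOne_flipOne (hc : x ∈ cube n) (h : (Finset.univ.filter fun j => x j ≠ 2).Nonempty) :
    flipOne (flipOne x) = x := by
  have hsupp : (Finset.univ.filter fun j => flipOne x j ≠ 2) =
      (Finset.univ.filter fun j => x j ≠ 2) := by
    ext j
    simp only [Finset.mem_filter, Finset.mem_univ, true_and]
    rw [not_iff_not]
    exact flipOne_two_iff hc h j
  have h2 : (Finset.univ.filter fun j => flipOne x j ≠ 2).Nonempty := by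
    rw [hsupp]; exact h
  rw [flipOne_eq h2]
  set j0 := (Finset.univ.filter fun j => x j ≠ 2).min' h with hj0
  have hmin : (Finset.univ.filter fun j => flipOne x j ≠ 2).min' h2 = j0 := by
    congr 1
  rw [hmin, flipOne_eq h, ← hj0]
  simp only [Function.update_self]
  rw [Function.update_idem]
  have : (4:ℤ) - (4 - x j0) = x j0 := by ring
  rw [this, Function.update_eq_self]

lemma flipOne_parity (hc : x ∈ cube n) (h : (Finset.univ.filter fun j => x j ≠ 2).Nonempty) :
    Even (Finset.univ.filter fun j => flipOne x j = (1:ℤ)).card ↔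
      ¬ Even (Finset.univ.filter fun j => x j = (1:ℤ)).card := by
  rw [flipOne_eq h]
  set j0 := (Finset.univ.filter fun j => x j ≠ 2).min' h with hj0
  have hj0mem : j0 ∈ Finset.univ.filter fun j => x j ≠ 2 := Finset.min'_mem _ h
  have hj0ne : x j0 ≠ 2 := by simpa using hj0mem
  have hj0c := mem_cube.1 hc j0
  rcases hj0c with h1 | h2 | h3
  · -- x j0 = 1 : erase j0
    have hset : (Finset.univ.filter fun j => Function.update x j0 (4 - x j0) j = (1:ℤ)) =
        (Finset.univ.filter fun j => x j = (1:ℤ)).erase j0 := by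
      ext j
      by_cases hjj : j = j0
      · subst hjj
        simp [Function.update_self, h1]
      · simp [Function.update_of_ne hjj, hjj]
    rw [hset, Finset.card_erase_of_mem (by simp [h1])]
    have hpos : 0 < (Finset.univ.filter fun j => x j = (1:ℤ)).card :=
      Finset.card_pos.2 ⟨j0, by simp [h1]⟩
    rw [Nat.even_sub (by omega)]
    simp [Nat.even_iff, Nat.odd_iff]
  · exact absurd h2 hj0ne
  · -- x j0 = 3 : insert j0
    have hset : (Finset.univ.filter fun j => Function.update x j0 (4 - x j0) j = (1:ℤ)) =
        insert j0 (Finset.univ.filter fun j => x j = (1:ℤ)) := by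
      ext j
      by_cases hjj : j = j0
      · subst hjj
        simp [Function.update_self, h3]
      · simp [Function.update_of_ne hjj, hjj]
    rw [hset, Finset.card_insert_of_notMem (by simp [h3])]
    simp [Nat.even_add_one]

end flipOnefacts

lemma card_sphereEven {n i : ℕ} (h1 : 1 ≤ i) (h2 : i ≤ n) :
    (sphereEven n i).card = n.choose i * 2 ^ (i - 1) := by
  classical
  set O := (sphere n i).filter
    (fun x => ¬ Even (Finset.univ.filter fun j => x j = (1:ℤ)).card) with hO
  have hEO : (sphereEven n i).card = O.card := by
    apply Finset.card_bij' (fun x _ => flipOne x) (fun x _ => flipOne x)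
    · intro x hx
      have hs := sphereEven_subset_sphere hx
      have hc := sphere_subset_cube hs
      have hne := supp_nonempty h1 h2 hs
      rw [hO, Finset.mem_filter]
      exact ⟨flipOne_mem_sphere h1 h2 hs, fun hodd =>
        ((flipOne_parity hc hne).1 hodd) (Finset.mem_filter.1 hx).2⟩
    · intro x hx
      rw [hO, Finset.mem_filter] at hx
      have hc := sphere_subset_cube hx.1
      have hne := supp_nonempty h1 h2 hx.1
      rw [sphereEven, Finset.mem_filter]
      refine ⟨flipOne_mem_sphere h1 h2 hx.1, ?_⟩
      by_contra hodd
      exact hx.2 (not_not.1 ((flipOne_parity hc hne).not.1 hodd))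
    · intro x hx
      have hs := sphereEven_subset_sphere hx
      exact flipOne_flipOne (sphere_subset_cube hs) (supp_nonempty h1 h2 hs)
    · intro x hx
      rw [hO, Finset.mem_filter] at hx
      exact flipOne_flipOne (sphere_subset_cube hx.1) (supp_nonempty h1 h2 hx.1)
  have hsum : (sphereEven n i).card + O.card = (sphere n i).card :=
    Finset.card_filter_add_card_filter_not _
  rw [card_sphere h2] at hsum
  have hpow : n.choose i * 2 ^ i = 2 * (n.choose i * 2 ^ (i - 1)) := by
    have hii : i - 1 + 1 = i := by omega
    have hp : (2:ℕ) ^ i = 2 ^ (i - 1) * 2 := by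
      conv_lhs => rw [← hii]
      rw [pow_succ]
    rw [hp]
    ring
  rw [hpow, ← hEO] at hsum
  omega

lemma card_union_main {n i : ℕ} (h1 : 1 ≤ i) (h2 : i ≤ n) :
    (sphere n (i - 1) ∪ sphereEven n i).card = (n + 1).choose i * 2 ^ (i - 1) := by
  have hdisj : Disjoint (sphere n (i - 1)) (sphereEven n i) := by
    rw [Finset.disjoint_left]
    intro x hx hx'
    have ha := (Finset.mem_filter.1 hx).2
    have hb := (Finset.mem_filter.1 (sphereEven_subset_sphere hx')).2
    omega
  rw [Finset.card_union_of_disjoint hdisj, card_sphere (by omega), card_sphereEven h1 h2]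
  obtain ⟨j, rfl⟩ : ∃ j, i = j + 1 := ⟨i - 1, by omega⟩
  simp only [Nat.add_sub_cancel]
  rw [← Nat.add_mul, ← Nat.choose_succ_succ]



/-- For `1 ≤ i ≤ n`, `S_{i-1,n} ∪ S_{i,n}^e` contains no geometric line; consequently
`c'_{n,3} ≥ C(n+1,i)·2^{i-1}`. -/
theorem sphere_union_even_moser (n i : ℕ) (h1 : 1 ≤ i) (h2 : i ≤ n) :
    MoserFree (sphere n (i - 1) ∪ sphereEven n i) ∧
      (n + 1).choose i * 2 ^ (i - 1) ≤ cMoser n := by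
  have hfree : MoserFree (sphere n (i - 1) ∪ sphereEven n i) := moser_main h1 h2
  refine ⟨hfree, ?_⟩
  have hbdd : BddAbove {m | ∃ A : Finset (Fin n → ℤ), A ⊆ cube n ∧ MoserFree A ∧ A.card = m} := by
    refine ⟨(cube n).card, ?_⟩
    rintro m ⟨A, hA, -, rfl⟩
    exact Finset.card_le_card hA
  apply le_csSup hbdd
  refine ⟨sphere n (i - 1) ∪ sphereEven n i, ?_, hfree, card_union_main h1 h2⟩
  exact Finset.union_subset sphere_subset_cube
    (fun x hx => sphere_subset_cube (sphereEven_subset_sphere hx))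
end

section
/- Let B ⊆ S_{5,5} = {1,3}^5. Then there exist at least |B| − 4 (unordered) pairs of distinct strings in B that differ in exactly two positions. -/
set_option maxHeartbeats 2000000 in
private lemma triple_dist : ∀ u v w : Fin 5 → Fin 2, u ≠ v → u ≠ w → v ≠ w →
    (∑ i, u i) = (∑ i, v i) → (∑ i, u i) = (∑ i, w i) →
    hammingDist u v = 2 ∨ hammingDist u w = 2 ∨ hammingDist v w = 2 := by decide

private lemma exists_pair (B : Finset (Fin 5 → Fin 2)) (h5 : 5 ≤ B.card) :
    ∃ u ∈ B, ∃ v ∈ B, u ≠ v ∧ hammingDist u v = 2 := by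
  have hmaps : ∀ a ∈ B, (∑ i, a i) ∈ (Finset.univ : Finset (Fin 2)) := by
    intro a _; exact Finset.mem_univ _
  have hlt : (Finset.univ : Finset (Fin 2)).card * 2 < B.card := by
    simpa using lt_of_lt_of_le (by norm_num) h5
  obtain ⟨y, -, hy⟩ :=
    Finset.exists_lt_card_fiber_of_mul_lt_card_of_maps_to hmaps hlt
  obtain ⟨t, ht, hcard⟩ := Finset.exists_subset_card_eq hy
  obtain ⟨a, b, c, hab, hac, hbc, rfl⟩ := Finset.card_eq_three.mp hcard
  have ha := ht (show a ∈ ({a, b, c} : Finset (Fin 5 → Fin 2)) by simp)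
  have hb := ht (show b ∈ ({a, b, c} : Finset (Fin 5 → Fin 2)) by simp)
  have hc := ht (show c ∈ ({a, b, c} : Finset (Fin 5 → Fin 2)) by simp)
  simp only [Finset.mem_filter] at ha hb hc
  have h1 : (∑ i, a i) = (∑ i, b i) := by rw [ha.2, hb.2]
  have h2 : (∑ i, a i) = (∑ i, c i) := by rw [ha.2, hc.2]
  rcases triple_dist a b c hab hac hbc h1 h2 with h | h | h
  · exact ⟨a, ha.1, b, hb.1, hab, h⟩
  · exact ⟨a, ha.1, c, hc.1, hac, h⟩
  · exact ⟨b, hb.1, c, hc.1, hbc, h⟩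

private lemma main_aux : ∀ n (B : Finset (Fin 5 → Fin 2)), B.card = n →
    2 * (n - 4) ≤ ((B ×ˢ B).filter fun p => hammingDist p.1 p.2 = 2).card := by
  intro n
  induction n with
  | zero => intro B _; simp
  | succ n ih =>
    intro B hB
    by_cases hle : n + 1 ≤ 4
    · have : n + 1 - 4 = 0 := by omega
      rw [this]; exact Nat.zero_le _
    · have h5 : 5 ≤ B.card := by omega
      obtain ⟨u, hu, v, hv, huv, hdist⟩ := exists_pair B h5
      set B' := B.erase u with hB'
      have hvB' : v ∈ B' := Finset.mem_erase.mpr ⟨fun h => huv h.symm, hv⟩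
      have hcard' : B'.card = n := by
        rw [hB', Finset.card_erase_of_mem hu, hB]; omega
      set S := (B' ×ˢ B').filter (fun p => hammingDist p.1 p.2 = 2) with hS
      set T := (B ×ˢ B).filter (fun p => hammingDist p.1 p.2 = 2) with hT
      have hsub : insert ((u, v)) (insert ((v, u)) S) ⊆ T := by
        intro p hp
        simp only [Finset.mem_insert] at hp
        rcases hp with rfl | rfl | hp
        · exact Finset.mem_filter.mpr ⟨Finset.mem_product.mpr ⟨hu, hv⟩, hdist⟩
        · exact Finset.mem_filter.mpr ⟨Finset.mem_product.mpr ⟨hv, hu⟩,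
            by rw [hammingDist_comm]; exact hdist⟩
        · have := Finset.mem_filter.mp hp
          obtain ⟨h1, h2⟩ := Finset.mem_product.mp this.1
          exact Finset.mem_filter.mpr ⟨Finset.mem_product.mpr
            ⟨Finset.mem_of_mem_erase h1, Finset.mem_of_mem_erase h2⟩, this.2⟩
      have huS : (u, v) ∉ insert ((v, u)) S := by
        simp only [Finset.mem_insert]
        push_neg
        constructor
        · intro h; exact huv (congrArg Prod.fst h)
        · intro h
          have := (Finset.mem_product.mp (Finset.mem_filter.mp h).1).1
          exact (Finset.mem_erase.mp this).1 rfl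
      have hvS : (v, u) ∉ S := by
        intro h
        have := (Finset.mem_product.mp (Finset.mem_filter.mp h).1).2
        exact (Finset.mem_erase.mp this).1 rfl
      have hcards : S.card + 2 ≤ T.card := by
        have := Finset.card_le_card hsub
        rwa [Finset.card_insert_of_notMem huS, Finset.card_insert_of_notMem hvS] at this
      have hih : 2 * (n - 4) ≤ S.card := ih B' hcard'
      have : 2 * (n + 1 - 4) ≤ 2 * (n - 4) + 2 := by omega
      calc 2 * (n + 1 - 4) ≤ 2 * (n - 4) + 2 := this
        _ ≤ S.card + 2 := by omega
        _ ≤ T.card := hcards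

/-- For any `B ⊆ {1,3}^5` (modeled as `Fin 5 → Fin 2`), there are at least `|B| - 4`
unordered pairs of distinct strings in `B` at Hamming distance exactly 2 (equivalently,
at least `2(|B| - 4)` ordered pairs). -/
theorem pairs_at_distance_two (B : Finset (Fin 5 → Fin 2)) :
    2 * (B.card - 4) ≤
      ((B ×ˢ B).filter fun p => hammingDist p.1 p.2 = 2).card := by
  exact main_aux B.card B rfl
end

section
/- For every n ≥ 1, c'_{n,6} ≥ 2^n · c_{n,3}: if A ⊆ [3]^n is free of combinatorial lines, then the preimage of A under the map [6]^n → [3]^n sending each coordinate 1,2,3,4,5,6 to 1,2,3,3,2,1 respectively contains no geometric line in [6]^n. -/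
/-- The cube `[3]^n = {1,2,3}^n`, viewed inside `ℤ^n`. -/
def cube3 (n : ℕ) : Finset (Fin n → ℤ) :=
  Fintype.piFinset fun _ => ({1, 2, 3} : Finset ℤ)

/-- The cube `[6]^n = {1,…,6}^n`, viewed inside `ℤ^n`. -/
def cube6 (n : ℕ) : Finset (Fin n → ℤ) :=
  Fintype.piFinset fun _ => ({1, 2, 3, 4, 5, 6} : Finset ℤ)

/-- Combinatorial-line-freeness in `[3]^n`: no template `w` over `{1,2,3} ∪ {x}` with at
least one wildcard has all three substitutions `w(1), w(2), w(3)` in `A`. -/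
def LineFree3 {n : ℕ} (A : Finset (Fin n → ℤ)) : Prop :=
  ¬ ∃ w : Fin n → Option ℤ,
      (∀ j v, w j = some v → v ∈ ({1, 2, 3} : Set ℤ)) ∧ (∃ j, w j = none) ∧
      ∀ i ∈ ({1, 2, 3} : Set ℤ), (fun j => (w j).getD i) ∈ A

/-- Geometric-line-freeness in `[6]^n`: no line `{a, a+r, …, a+5r}` with `r ≠ 0` is
contained in `A`. -/
def MoserFree6 {n : ℕ} (A : Finset (Fin n → ℤ)) : Prop :=
  ¬ ∃ a r : Fin n → ℤ, r ≠ 0 ∧ ∀ k : Fin 6, (fun j => a j + (k : ℤ) * r j) ∈ A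

/-- `c_{n,3}`, the maximal size of a combinatorial-line-free subset of `[3]^n`. -/
noncomputable def cDHJ3 (n : ℕ) : ℕ :=
  sSup {m | ∃ A : Finset (Fin n → ℤ), A ⊆ cube3 n ∧ LineFree3 A ∧ A.card = m}

/-- `c'_{n,6}`, the maximal size of a geometric-line-free subset of `[6]^n`. -/
noncomputable def cMoser6 (n : ℕ) : ℕ :=
  sSup {m | ∃ A : Finset (Fin n → ℤ), A ⊆ cube6 n ∧ MoserFree6 A ∧ A.card = m}

/-- The preimage in `[6]^n` of `A ⊆ [3]^n` under the coordinatewise folding map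
`i ↦ min(i, 7-i)`, which sends `1,2,3,4,5,6` to `1,2,3,3,2,1`. -/
def fold {n : ℕ} (A : Finset (Fin n → ℤ)) : Finset (Fin n → ℤ) :=
  (cube6 n).filter fun x => (fun j => min (x j) (7 - x j)) ∈ A

lemma mem_cube3_iff {n : ℕ} {y : Fin n → ℤ} :
    y ∈ cube3 n ↔ ∀ j, y j = 1 ∨ y j = 2 ∨ y j = 3 := by
  simp [cube3, Fintype.mem_piFinset]

lemma mem_cube6_iff {n : ℕ} {y : Fin n → ℤ} :
    y ∈ cube6 n ↔ ∀ j, y j = 1 ∨ y j = 2 ∨ y j = 3 ∨ y j = 4 ∨ y j = 5 ∨ y j = 6 := by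
  simp [cube6, Fintype.mem_piFinset]

lemma fold_moserFree {n : ℕ} (A : Finset (Fin n → ℤ)) (hA : A ⊆ cube3 n)
    (hL : LineFree3 A) : MoserFree6 (fold A) := by
  rintro ⟨a, r, hr, hline⟩
  have hmem : ∀ k : Fin 6, (fun j => a j + (k : ℤ) * r j) ∈ cube6 n :=
    fun k => (Finset.mem_filter.mp (hline k)).1
  have hA' : ∀ k : Fin 6, (fun j => min (a j + (k : ℤ) * r j) (7 - (a j + (k : ℤ) * r j))) ∈ A :=
    fun k => (Finset.mem_filter.mp (hline k)).2
  have hco : ∀ j, (r j = 0 ∧ 1 ≤ a j ∧ a j ≤ 6) ∨ (r j = 1 ∧ a j = 1) ∨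
      (r j = -1 ∧ a j = 6) := by
    intro j
    have h0 := mem_cube6_iff.mp (hmem 0) j
    have h5 := mem_cube6_iff.mp (hmem 5) j
    simp only [Fin.isValue, Fin.val_zero] at h0 h5
    norm_num at h0 h5
    omega
  apply hL
  refine ⟨fun j => if r j = 0 then some (min (a j) (7 - a j)) else none, ?_, ?_, ?_⟩
  · intro j v hv
    dsimp only at hv
    by_cases hj : r j = 0
    · rw [if_pos hj, Option.some_inj] at hv
      rcases hco j with ⟨_, h1, h2⟩ | ⟨h1, _⟩ | ⟨h1, _⟩ <;>
        simp only [Set.mem_insert_iff, Set.mem_singleton_iff] <;> omega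
    · rw [if_neg hj] at hv; exact absurd hv (by simp)
  · obtain ⟨j, hj⟩ := Function.ne_iff.mp hr
    exact ⟨j, if_neg hj⟩
  · intro i hi
    have key : ∀ k : Fin 6, (k : ℤ) + 1 = i → (k : ℤ) ≤ 2 →
        (fun j => (Option.getD (if r j = 0 then some (min (a j) (7 - a j)) else none) i)) ∈ A := by
      intro k hk hk2
      have heq : (fun j => (Option.getD (if r j = 0 then some (min (a j) (7 - a j)) else none) i))
          = fun j => min (a j + (k : ℤ) * r j) (7 - (a j + (k : ℤ) * r j)) := by
        funext j
        by_cases hj : r j = 0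
        · rw [if_pos hj, hj]; simp
        · rw [if_neg hj]
          simp only [Option.getD_none]
          rcases hco j with ⟨h1, _⟩ | ⟨h1, h2⟩ | ⟨h1, h2⟩
          · exact absurd h1 hj
          · rw [h1, h2]; omega
          · rw [h1, h2]; omega
      rw [heq]; exact hA' k
    simp only [Set.mem_insert_iff, Set.mem_singleton_iff] at hi
    rcases hi with rfl | rfl | rfl
    · exact key 0 (by norm_num) (by norm_num)
    · exact key 1 (by norm_num) (by norm_num)
    · exact key 2 (by norm_num) (by norm_num)

lemma card_fold {n : ℕ} (A : Finset (Fin n → ℤ)) (hA : A ⊆ cube3 n) :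
    (fold A).card = 2 ^ n * A.card := by
  have hb : ∀ y ∈ A, ∀ j, y j = 1 ∨ y j = 2 ∨ y j = 3 :=
    fun y hy => mem_cube3_iff.mp (hA hy)
  have h : (fold A).card = ((Finset.univ : Finset (Fin n → Bool)) ×ˢ A).card := by
    apply Finset.card_nbij' (i := fun x => (fun j => decide (x j ≤ 3), fun j => min (x j) (7 - x j)))
      (j := fun p => fun j => if p.1 j then p.2 j else 7 - p.2 j)
    · intro x hx
      obtain ⟨hx6, hxA⟩ := Finset.mem_filter.mp hx
      exact Finset.mem_product.mpr ⟨Finset.mem_univ _, hxA⟩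
    · intro p hp
      obtain ⟨-, hpA⟩ := Finset.mem_product.mp hp
      have h3 := hb _ hpA
      refine Finset.mem_filter.mpr ⟨mem_cube6_iff.mpr fun j => ?_, ?_⟩
      · by_cases h : p.1 j <;> simp [h] <;> rcases h3 j with h' | h' | h' <;> omega
      · have : (fun j => min ((if p.1 j then p.2 j else 7 - p.2 j))
            (7 - (if p.1 j then p.2 j else 7 - p.2 j))) = p.2 := by
          funext j
          by_cases h : p.1 j <;> simp [h] <;> rcases h3 j with h' | h' | h' <;> omega
        rw [this]; exact hpA
    · intro x hx
      obtain ⟨hx6, -⟩ := Finset.mem_filter.mp hx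
      have h6 := mem_cube6_iff.mp hx6
      funext j
      by_cases h : x j ≤ 3 <;> simp [h] <;> rcases h6 j with h'|h'|h'|h'|h'|h' <;> omega
    · intro p hp
      obtain ⟨-, hpA⟩ := Finset.mem_product.mp hp
      have h3 := hb _ hpA
      have e1 : (fun j => decide ((if p.1 j then p.2 j else 7 - p.2 j) ≤ 3)) = p.1 := by
        funext j
        by_cases h : p.1 j <;> simp [h] <;> rcases h3 j with h'|h'|h' <;> omega
      have e2 : (fun j => min ((if p.1 j then p.2 j else 7 - p.2 j))
          (7 - (if p.1 j then p.2 j else 7 - p.2 j))) = p.2 := by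
        funext j
        by_cases h : p.1 j <;> simp [h] <;> rcases h3 j with h'|h'|h' <;> omega
      exact Prod.ext e1 e2
  rw [h, Finset.card_product, Finset.card_univ]
  simp

lemma lineFree3_empty {n : ℕ} : LineFree3 (∅ : Finset (Fin n → ℤ)) := by
  rintro ⟨w, -, -, h3⟩
  have := h3 1 (by simp)
  simp at this

/-- For every `n ≥ 1`: if `A ⊆ [3]^n` is free of combinatorial lines, then its preimage
under the folding map contains no geometric line in `[6]^n`; consequently
`c'_{n,6} ≥ 2^n · c_{n,3}`. -/
theorem moser6_ge_dhj3 (n : ℕ) (hn : 1 ≤ n) :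
    (∀ A : Finset (Fin n → ℤ), A ⊆ cube3 n → LineFree3 A → MoserFree6 (fold A)) ∧
      2 ^ n * cDHJ3 n ≤ cMoser6 n := by
  refine ⟨fold_moserFree, ?_⟩
  have hbdd3 : BddAbove {m | ∃ A : Finset (Fin n → ℤ), A ⊆ cube3 n ∧ LineFree3 A ∧ A.card = m} :=
    ⟨(cube3 n).card, by rintro m ⟨A, hA, -, rfl⟩; exact Finset.card_le_card hA⟩
  have hbdd6 : BddAbove {m | ∃ A : Finset (Fin n → ℤ), A ⊆ cube6 n ∧ MoserFree6 A ∧ A.card = m} :=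
    ⟨(cube6 n).card, by rintro m ⟨A, hA, -, rfl⟩; exact Finset.card_le_card hA⟩
  have hne : {m | ∃ A : Finset (Fin n → ℤ), A ⊆ cube3 n ∧ LineFree3 A ∧ A.card = m}.Nonempty :=
    ⟨0, ∅, Finset.empty_subset _, lineFree3_empty, Finset.card_empty⟩
  obtain ⟨A, hA, hL, hc⟩ : cDHJ3 n ∈ {m | ∃ A : Finset (Fin n → ℤ),
      A ⊆ cube3 n ∧ LineFree3 A ∧ A.card = m} := Nat.sSup_mem hne hbdd3
  apply le_csSup hbdd6
  exact ⟨fold A, Finset.filter_subset _ _, fold_moserFree A hA hL, by rw [card_fold A hA, hc]⟩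
end

section
/- Suppose a linear inequality v_0·α_0(A) + ... + v_n·α_n(A) ≤ s holds for all geometric-line-free sets A ⊆ [3]^n, where α_i(A) = |A ∩ S_{n-i,n}| / (C(n,i)·2^{n-i}). Then for all integers q ≥ 1, r ≥ 0, N ≥ nq + r and every geometric-line-free set A ⊆ [3]^N, one has v_0·α_{r}(A) + v_1·α_{q+r}(A) + ... + v_n·α_{nq+r}(A) ≤ s, where now α_j(A) = |A ∩ S_{N-j,N}| / (C(N,j)·2^{N-j}). -/
/-- The density \`α_j(A)\`: the fraction of the set of words of \`[3]^n\` with exactly \`j\`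
coordinates equal to 2 (a set of size \`C(n,j)·2^(n-j)\`) that belongs to \`A\`. -/
noncomputable def density (n : ℕ) (A : Finset (Fin n → ℤ)) (j : ℕ) : ℝ :=
  ((A.filter fun x => (Finset.univ.filter fun t => x t = (2 : ℤ)).card = j).card : ℝ) /
    ((n.choose j : ℝ) * 2 ^ (n - j))

open Finset

theorem card_filter_mem_mul_card_eq {α β : Type*} [DecidableEq β] {s : Finset α}
    {t : Finset β} {f : α → β} (hf : ∀ a ∈ s, f a ∈ t)
    (hfib : ∀ y ∈ t, ∀ y' ∈ t, #{a ∈ s | f a = y} = #{a ∈ s | f a = y'}) (B : Finset β) :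
    #{a ∈ s | f a ∈ B} * #t = #s * #{y ∈ t | y ∈ B} := by
  obtain rfl | ⟨y₀, hy₀⟩ := t.eq_empty_or_nonempty
  · simp [eq_empty_of_forall_notMem fun a ha => by simpa using hf a ha]
  have hcount : ∀ t' ⊆ t, #{a ∈ s | f a ∈ t'} = #t' * #{a ∈ s | f a = y₀} := fun t' ht' => by
    rw [← sum_card_fiberwise_eq_card_filter]
    exact sum_const_nat fun y hy => hfib y (ht' hy) y₀ hy₀
  have hs : #s = #t * #{a ∈ s | f a = y₀} := by
    rw [← hcount t subset_rfl, filter_true_of_mem hf]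
  have hsB : #{a ∈ s | f a ∈ B} = #{y ∈ t | y ∈ B} * #{a ∈ s | f a = y₀} := by
    rw [← hcount _ (filter_subset _ _)]
    congr 1
    exact filter_congr fun a ha => by simp [hf a ha]
  rw [hs, hsB]
  ring

namespace Moser

def twos {m : ℕ} (x : Fin m → ℤ) : Finset (Fin m) := {t | x t = 2}

def sphere (m j : ℕ) : Finset (Fin m → ℤ) := {x ∈ cube m | #(twos x) = j}

theorem card_sphere (m j : ℕ) : #(sphere m j) = m.choose j * 2 ^ (m - j) := by
  have hfiber : ∀ T : Finset (Fin m), {x ∈ cube m | twos x = T}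
      = Fintype.piFinset fun c => if c ∈ T then ({2} : Finset ℤ) else {1, 3} := by
    intro T
    ext x
    simp only [cube, twos, mem_filter, Fintype.mem_piFinset, Finset.ext_iff, mem_univ, true_and,
      ← forall_and]
    refine forall_congr' fun c => ?_
    split_ifs with hc <;> simp [hc] <;> omega
  have hmaps : ∀ x ∈ sphere m j, twos x ∈ powersetCard j univ := fun x hx =>
    mem_powersetCard.2 ⟨subset_univ _, (mem_filter.1 hx).2⟩
  rw [card_eq_sum_card_fiberwise hmaps,
    show m.choose j = #(powersetCard j (univ : Finset (Fin m))) by simp]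
  refine sum_const_nat fun T hT => ?_
  rw [sphere, filter_filter, ← (mem_powersetCard.1 hT).2]
  rw [filter_congr fun x _ => by rw [and_iff_right_of_imp fun h => h ▸ rfl], hfiber]
  simp [Fintype.card_piFinset, apply_ite card, prod_ite, filter_notMem_eq_sdiff, card_sdiff]

/-- A coordinate of a geometric embedding `[3]^n → [3]^N`: `.inl (j, true)` copies coordinate `j`,
`.inl (j, false)` copies it reflected by `x ↦ 4 - x`, `.inr none` is the constant `2` and
`.inr (some b)` is the constant `1` or `3`. -/
abbrev Code (n : ℕ) := (Fin n × Bool) ⊕ Option Bool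

namespace Code

variable {n : ℕ}

def eval : Code n → (Fin n → ℤ) → ℤ
  | .inl (j, b), x => if b then x j else 4 - x j
  | .inr none, _ => 2
  | .inr (some b), _ => if b then 1 else 3

def slope : Code n → (Fin n → ℤ) → ℤ
  | .inl (j, b), d => if b then d j else -d j
  | .inr _, _ => 0

def index : Code n → Option (Fin n)
  | .inl (j, _) => some j
  | .inr _ => none

def reflect : Code n → Code n
  | .inl (j, b) => .inl (j, !b)
  | .inr none => .inr none
  | .inr (some b) => .inr (some !b)

theorem eval_mem (u : Code n) {x : Fin n → ℤ} (hx : x ∈ cube n) :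
    eval u x ∈ ({1, 2, 3} : Finset ℤ) := by
  have hxj : ∀ j, x j = 1 ∨ x j = 2 ∨ x j = 3 := by simpa [cube] using hx
  rcases u with ⟨j, _ | _⟩ | _ | (_ | _) <;> simp [eval] <;> have := hxj j <;> omega

theorem eval_add (u : Code n) (x d : Fin n → ℤ) : eval u (x + d) = eval u x + slope u d := by
  rcases u with ⟨j, _ | _⟩ | _ | (_ | _) <;> simp [eval, slope]
  ring

theorem slope_ne_zero {u : Code n} {j : Fin n} (hu : index u = some j) {d : Fin n → ℤ}
    (hd : d j ≠ 0) : slope u d ≠ 0 := by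
  rcases u with ⟨j, _ | _⟩ | _ <;> simp_all [index, slope]

theorem eval_eq_two_iff_of_index_eq_some {u : Code n} {j : Fin n} (hu : index u = some j)
    (x : Fin n → ℤ) : eval u x = 2 ↔ x j = 2 := by
  rcases u with ⟨j, _ | _⟩ | _ <;> simp_all [index, eval]
  omega

theorem eval_eq_two_iff_of_index_eq_none {u : Code n} (hu : index u = none) (x : Fin n → ℤ) :
    eval u x = 2 ↔ u = .inr none := by
  rcases u with ⟨j, _ | _⟩ | _ | (_ | _) <;> simp_all [index, eval]

theorem eval_reflect (u : Code n) (x : Fin n → ℤ) : eval (reflect u) x = 4 - eval u x := by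
  rcases u with ⟨j, _ | _⟩ | _ | (_ | _) <;> simp [eval, reflect]

theorem index_reflect (u : Code n) : index (reflect u) = index u := by
  rcases u with ⟨j, _ | _⟩ | _ | (_ | _) <;> rfl

theorem reflect_eq_inr_none_iff {u : Code n} : reflect u = .inr none ↔ u = .inr none := by
  rcases u with ⟨j, _ | _⟩ | _ | (_ | _) <;> simp [reflect]

theorem reflect_injective : Function.Injective (reflect : Code n → Code n) := by
  intro u v h
  rcases u with ⟨j, _ | _⟩ | _ | (_ | _) <;> rcases v with ⟨j', _ | _⟩ | _ | _ <;>
    simp_all [reflect]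

end Code

section Embedding

variable {n N : ℕ}

def embed (a : Fin N → Code n) (x : Fin n → ℤ) : Fin N → ℤ := fun c => Code.eval (a c) x

def embeddings (n N q r : ℕ) : Finset (Fin N → Code n) :=
  {a | (∀ j, #{c | Code.index (a c) = some j} = q) ∧ #{c | a c = .inr none} = r}

def pullback (a : Fin N → Code n) (A : Finset (Fin N → ℤ)) : Finset (Fin n → ℤ) :=
  {x ∈ cube n | embed a x ∈ A}

theorem pullback_subset_cube (a : Fin N → Code n) (A : Finset (Fin N → ℤ)) :
    pullback a A ⊆ cube n :=
  filter_subset _ _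

theorem embed_mem_cube (a : Fin N → Code n) {x : Fin n → ℤ} (hx : x ∈ cube n) :
    embed a x ∈ cube N :=
  Fintype.mem_piFinset.2 fun c => Code.eval_mem (a c) hx

theorem card_twos_embed {q r : ℕ} {a : Fin N → Code n} (ha : a ∈ embeddings n N q r)
    (x : Fin n → ℤ) : #(twos (embed a x)) = q * #(twos x) + r := by
  obtain ⟨hindex, hconst⟩ := (mem_filter.1 ha).2
  have hmaps : ∀ c ∈ twos (embed a x), Code.index (a c) ∈ (univ : Finset (Option (Fin n))) :=
    fun _ _ => mem_univ _
  have hterm : ∀ j, #{c ∈ twos (embed a x) | Code.index (a c) = some j}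
      = if x j = 2 then q else 0 := fun j => by
    rw [twos, filter_filter, ← hindex j]
    split_ifs with hj
    · refine congrArg card <| filter_congr fun c _ => ?_
      exact ⟨And.right, fun h => ⟨(Code.eval_eq_two_iff_of_index_eq_some h x).2 hj, h⟩⟩
    · refine card_eq_zero.2 <| filter_eq_empty_iff.2 fun c _ h => ?_
      exact hj ((Code.eval_eq_two_iff_of_index_eq_some h.2 x).1 h.1)
  have hnone : #{c ∈ twos (embed a x) | Code.index (a c) = none} = r := by
    rw [twos, filter_filter, ← hconst]
    refine congrArg card <| filter_congr fun c _ => ?_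
    exact ⟨fun h => (Code.eval_eq_two_iff_of_index_eq_none h.2 x).1 h.1,
      fun h => by simp [h, embed, Code.eval, Code.index]⟩
  rw [card_eq_sum_card_fiberwise hmaps, Fintype.sum_option, hnone,
    sum_congr rfl fun j _ => hterm j, ← sum_filter, sum_const_nat fun _ _ => rfl, add_comm,
    mul_comm, twos]

theorem embed_add (a : Fin N → Code n) (x d : Fin n → ℤ) :
    embed a (x + d) = embed a x + fun c => Code.slope (a c) d :=
  funext fun c => Code.eval_add (a c) x d

theorem moserFree_pullback {a : Fin N → Code n} (ha : ∀ j, ∃ c, Code.index (a c) = some j)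
    {A : Finset (Fin N → ℤ)} (hA : MoserFree A) : MoserFree (pullback a A) := by
  rintro ⟨x, d, hd, hx, hxd, hxdd⟩
  obtain ⟨j, hj⟩ := Function.ne_iff.1 hd
  obtain ⟨c, hc⟩ := ha j
  refine hA ⟨embed a x, fun c => Code.slope (a c) d,
    fun h => Code.slope_ne_zero hc hj (congrFun h c), (mem_filter.1 hx).2, ?_, ?_⟩
  · rw [← embed_add]
    exact (mem_filter.1 hxd).2
  · rw [← embed_add, ← embed_add]
    exact (mem_filter.1 hxdd).2

theorem exists_index_eq_of_mem_embeddings {q r : ℕ} (hq : 1 ≤ q) {a : Fin N → Code n}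
    (ha : a ∈ embeddings n N q r) (j : Fin n) : ∃ c, Code.index (a c) = some j := by
  obtain ⟨c, hc⟩ := card_pos.1 (((mem_filter.1 ha).2.1 j).symm ▸ hq)
  exact ⟨c, (mem_filter.1 hc).2⟩

theorem embeddings_nonempty {q r : ℕ} (hN : n * q + r ≤ N) :
    (embeddings n N q r).Nonempty := by
  let e : Fin N ≃ (Fin n × Fin q) ⊕ (Fin r ⊕ Fin (N - (n * q + r))) :=
    Fintype.equivOfCardEq (by simp; omega)
  let g : (Fin n × Fin q) ⊕ (Fin r ⊕ Fin (N - (n * q + r))) → Code n :=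
    Sum.elim (fun p => .inl (p.1, true)) (Sum.elim (fun _ => .inr none) fun _ => .inr (some true))
  have hcard (P : Code n → Prop) [DecidablePred P] : #{c | P (g (e c))} = #{z | P (g z)} :=
    card_equiv e (by simp)
  refine ⟨fun c => g (e c), mem_filter.2 ⟨mem_univ _, fun j => ?_, ?_⟩⟩
  · rw [hcard (fun u => Code.index u = some j), card_filter, Fintype.sum_sum_type,
      Fintype.sum_prod_type]
    simp [g, Code.index]
  · rw [hcard (fun u => u = .inr none), card_filter, Fintype.sum_sum_type, Fintype.sum_sum_type]
    simp [g]

end Embedding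

section Symmetry

variable {n N : ℕ}

def signedPerm (π : Equiv.Perm (Fin N)) (t : Fin N → Bool) (y : Fin N → ℤ) : Fin N → ℤ :=
  fun c => if t c then 4 - y (π c) else y (π c)

def signedPermCode (π : Equiv.Perm (Fin N)) (t : Fin N → Bool) (a : Fin N → Code n) :
    Fin N → Code n :=
  fun c => if t c then Code.reflect (a (π c)) else a (π c)

theorem embed_signedPermCode (π : Equiv.Perm (Fin N)) (t : Fin N → Bool)
    (a : Fin N → Code n) (x : Fin n → ℤ) :
    embed (signedPermCode π t a) x = signedPerm π t (embed a x) := by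
  funext c
  simp only [embed, signedPermCode, signedPerm]
  split_ifs
  · exact Code.eval_reflect _ x
  · rfl

theorem signedPermCode_injective (π : Equiv.Perm (Fin N)) (t : Fin N → Bool) :
    Function.Injective (signedPermCode (n := n) π t) := by
  intro a b h
  funext c
  have hc := congrFun h (π.symm c)
  simp only [signedPermCode, Equiv.apply_symm_apply] at hc
  split_ifs at hc
  · exact Code.reflect_injective hc
  · exact hc

theorem card_filter_signedPermCode (π : Equiv.Perm (Fin N)) (t : Fin N → Bool)
    (a : Fin N → Code n) (P : Code n → Prop) [DecidablePred P]
    (hP : ∀ u, P (Code.reflect u) ↔ P u) :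
    #{c | P (signedPermCode π t a c)} = #{c | P (a c)} :=
  card_equiv π fun c => by
    rw [mem_filter, mem_filter]
    simp only [mem_univ, true_and, signedPermCode]
    split_ifs
    exacts [hP _, Iff.rfl]

theorem signedPermCode_mem_embeddings (π : Equiv.Perm (Fin N)) (t : Fin N → Bool)
    {q r : ℕ} {a : Fin N → Code n} (ha : a ∈ embeddings n N q r) :
    signedPermCode π t a ∈ embeddings n N q r := by
  obtain ⟨hindex, hconst⟩ := (mem_filter.1 ha).2
  refine mem_filter.2 ⟨mem_univ _, fun j => ?_, ?_⟩
  · rw [card_filter_signedPermCode π t a (fun u => Code.index u = some j)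
      fun u => by rw [Code.index_reflect], hindex]
  · rw [card_filter_signedPermCode π t a (fun u => u = .inr none)
      fun _ => Code.reflect_eq_inr_none_iff, hconst]

theorem exists_signedPerm_eq {y y' : Fin N → ℤ} (hy : y ∈ cube N) (hy' : y' ∈ cube N)
    (h : #(twos y) = #(twos y')) : ∃ π t, signedPerm π t y = y' := by
  obtain ⟨π, hπ⟩ := Equiv.Perm.exists_map_finset_eq (twos y') (twos y) h.symm
  have htwo (c : Fin N) : y (π c) = 2 ↔ y' c = 2 := by
    have := mem_map' π.toEmbedding (a := c) (s := twos y')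
    rw [hπ] at this
    simpa [twos] using this
  have hval : ∀ c, y c = 1 ∨ y c = 2 ∨ y c = 3 := by simpa [cube] using hy
  have hval' : ∀ c, y' c = 1 ∨ y' c = 2 ∨ y' c = 3 := by simpa [cube] using hy'
  refine ⟨π, fun c => decide (y' c ≠ y (π c)), funext fun c => ?_⟩
  have hc2 := htwo c
  have hyc := hval (π c)
  have hy'c := hval' c
  simp only [signedPerm]
  split_ifs with hc <;> simp at hc <;> omega

/-- Signed permutations act transitively on each sphere and preserve `embeddings`, so all
points of a sphere have equally many preimages. -/
theorem card_fiber_eq {q r : ℕ} (s : Finset (Fin n → ℤ)) {y y' : Fin N → ℤ} (hy : y ∈ cube N)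
    (hy' : y' ∈ cube N) (h : #(twos y) = #(twos y')) :
    #{p ∈ embeddings n N q r ×ˢ s | embed p.1 p.2 = y}
      = #{p ∈ embeddings n N q r ×ˢ s | embed p.1 p.2 = y'} := by
  suffices hle : ∀ y y' : Fin N → ℤ, y ∈ cube N → y' ∈ cube N → #(twos y) = #(twos y') →
      #{p ∈ embeddings n N q r ×ˢ s | embed p.1 p.2 = y}
        ≤ #{p ∈ embeddings n N q r ×ˢ s | embed p.1 p.2 = y'} from
    le_antisymm (hle y y' hy hy' h) (hle y' y hy' hy h.symm)
  intro y y' hy hy' h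
  obtain ⟨π, t, hπt⟩ := exists_signedPerm_eq hy hy' h
  refine card_le_card_of_injOn (fun p => (signedPermCode π t p.1, p.2)) (fun p hp => ?_) ?_
  · simp only [coe_filter, mem_product, Set.mem_ofPred_eq] at hp ⊢
    exact ⟨⟨signedPermCode_mem_embeddings π t hp.1.1, hp.1.2⟩,
      by rw [embed_signedPermCode, hp.2, hπt]⟩
  · intro p _ p' _ hpp'
    simp only [Prod.mk.injEq] at hpp'
    exact Prod.ext (signedPermCode_injective π t hpp'.1) hpp'.2

end Symmetry

theorem density_eq_card_div_card_sphere {m : ℕ} {B : Finset (Fin m → ℤ)} (hB : B ⊆ cube m)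
    (j : ℕ) : density m B j = #{x ∈ sphere m j | x ∈ B} / #(sphere m j) := by
  have hfilter : {x ∈ B | #(twos x) = j} = {x ∈ sphere m j | x ∈ B} := by
    ext x
    simp only [sphere, mem_filter]
    exact ⟨fun h => ⟨⟨hB h.1, h.2⟩, h.1⟩, fun h => ⟨h.2, h.1.2⟩⟩
  rw [density, card_sphere, ← hfilter]
  push_cast
  rfl

theorem card_sphere_pos {m j : ℕ} (hj : j ≤ m) : 0 < #(sphere m j) := by
  rw [card_sphere]
  exact Nat.mul_pos (Nat.choose_pos hj) (Nat.two_pow_pos _)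

theorem sum_density_pullback {n N q r i : ℕ} (hi : i ≤ n) (hk : q * i + r ≤ N)
    {A : Finset (Fin N → ℤ)} (hA : A ⊆ cube N) :
    ∑ a ∈ embeddings n N q r, density n (pullback a A) i
      = #(embeddings n N q r) * density N A (q * i + r) := by
  set E := embeddings n N q r
  have hmaps : ∀ p ∈ E ×ˢ sphere n i, embed p.1 p.2 ∈ sphere N (q * i + r) := fun p hp => by
    obtain ⟨ha, hx⟩ := mem_product.1 hp
    obtain ⟨hx, hxi⟩ := mem_filter.1 hx
    exact mem_filter.2 ⟨embed_mem_cube _ hx, by rw [card_twos_embed ha, hxi]⟩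
  have hcount := card_filter_mem_mul_card_eq hmaps (fun y hy y' hy' =>
    card_fiber_eq _ (mem_filter.1 hy).1 (mem_filter.1 hy').1
      ((mem_filter.1 hy).2.trans (mem_filter.1 hy').2.symm)) A
  have hsum : ∑ a ∈ E, #{x ∈ sphere n i | x ∈ pullback a A}
      = #{p ∈ E ×ˢ sphere n i | embed p.1 p.2 ∈ A} := by
    rw [card_filter, sum_product]
    refine sum_congr rfl fun a _ => ?_
    rw [card_filter]
    refine sum_congr rfl fun x hx => ?_
    simp [pullback, (mem_filter.1 hx).1]
  have hS : (0 : ℝ) < #(sphere n i) := by exact_mod_cast card_sphere_pos hi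
  have hS' : (0 : ℝ) < #(sphere N (q * i + r)) := by exact_mod_cast card_sphere_pos hk
  rw [sum_congr rfl fun a _ => density_eq_card_div_card_sphere (pullback_subset_cube a A) i,
    ← sum_div, ← Nat.cast_sum, hsum, density_eq_card_div_card_sphere hA]
  rw [card_product, mul_comm #E] at hcount
  field_simp
  exact_mod_cast hcount

end Moser

open Moser

/-- Propagation lemma: a linear inequality `∑ vᵢ·αᵢ(A) ≤ s` valid for all Moser sets in
`[3]^n` propagates, for any `q ≥ 1`, `r ≥ 0` and `N ≥ nq + r`, to the inequality
`∑ vᵢ·α_{qi+r}(A) ≤ s` for all Moser sets `A ⊆ [3]^N`. -/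
theorem propagation (n : ℕ) (v : Fin (n + 1) → ℝ) (s : ℝ)
    (h : ∀ A : Finset (Fin n → ℤ), A ⊆ cube n → MoserFree A →
      ∑ i : Fin (n + 1), v i * density n A i ≤ s) :
    ∀ q r N : ℕ, 1 ≤ q → n * q + r ≤ N →
      ∀ A : Finset (Fin N → ℤ), A ⊆ cube N → MoserFree A →
        ∑ i : Fin (n + 1), v i * density N A (q * i + r) ≤ s := by
  intro q r N hq hN A hA hMA
  set E := embeddings n N q r
  have hE : (0 : ℝ) < #E := by exact_mod_cast (embeddings_nonempty hN).card_pos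
  have havg (i : Fin (n + 1)) :
      ∑ a ∈ E, density n (pullback a A) i = #E * density N A (q * i + r) := by
    have hi : (i : ℕ) ≤ n := Nat.lt_succ_iff.1 i.2
    exact sum_density_pullback hi (by nlinarith) hA
  have hbound : ∀ a ∈ E, ∑ i, v i * density n (pullback a A) i ≤ s := fun a ha =>
    h _ (pullback_subset_cube a A)
      (moserFree_pullback (exists_index_eq_of_mem_embeddings hq ha) hMA)
  refine le_of_mul_le_mul_left ?_ hE
  calc #E * ∑ i, v i * density N A (q * i + r)
      = ∑ a ∈ E, ∑ i, v i * density n (pullback a A) i := by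
        simp_rw [mul_sum, mul_left_comm (#E : ℝ), ← havg, mul_sum]
        exact sum_comm
    _ ≤ ∑ _a ∈ E, s := sum_le_sum hbound
    _ = #E * s := by rw [sum_const, nsmul_eq_mul]
end
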